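/- Let u be a C^3 harmonic map from the flat cylinder C_{r₁,r₂} = [r₁,r₂] × S¹ into a compact submanifold M ⊂ ℝ^N with second fundamental form A. Then the function f(t) = ∫_{S¹} |u_θ(t,θ)|² dθ satisfies f''(t) ≥ (3/2)·f(t) - 2·(sup_M |A|²)·∫_{S¹} |∇u(t,θ)|⁴ dθ. -/

import Mathlib

/-!
Differentiating twice under the integral gives `f'' = 2∫|u_tθ|² + 2∫⟨u_ttθ, u_θ⟩`, and since
`u_ttθ = ∂_θ u_tt`, integrating by parts in `θ` turns the second term into `-2∫⟨u_tt, u_θθ⟩`.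
With `X = u_θθ` and `Y = u_tt` we have `|Y + X| = |Δu| ≤ a|∇u|²`, and
`-2⟨Y, X⟩ ≥ 2|X|² - 2|Y + X||X| ≥ (3/2)|X|² - 2|Y + X|²`. Finally `u_θ` has mean zero on the
circle, so Wirtinger's inequality gives `∫|u_θ|² ≤ ∫|u_θθ|²`.
-/

open Real Set Function intervalIntegral RealInnerProductSpace

open MeasureTheory Complex in
theorem Complex.integral_norm_sq_le_integral_norm_sq_deriv {g g' : ℝ → ℂ}
    (hg : ∀ x, HasDerivAt g (g' x) x) (hg' : Continuous g') (hper : g (2 * π) = g 0)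
    (hmean : ∫ x in 0..2 * π, g x = 0) :
    ∫ x in 0..2 * π, ‖g x‖ ^ 2 ≤ ∫ x in 0..2 * π, ‖g' x‖ ^ 2 := by
  have h2π : (0 : ℝ) < 2 * π := two_pi_pos
  have parseval : ∀ f : ℝ → ℂ, Continuous f → HasSum (fun n => ‖fourierCoeffOn h2π f n‖ ^ 2)
      ((2 * π)⁻¹ * ∫ x in 0..2 * π, ‖f x‖ ^ 2) := fun f hf => by
    simpa using hasSum_sq_fourierCoeffOn h2π ((memLp_two_iff_integrable_sq_norm
      hf.aestronglyMeasurable).2 (hf.norm.pow 2).integrableOn_Ioc)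
  have hg_cont : Continuous g := continuous_iff_continuousAt.2 fun x => (hg x).continuousAt
  -- integrating by parts against `e_{-n}`: the `n`-th coefficient of `g'` is `i n` times that
  -- of `g`, and the `0`-th coefficient of `g` is its mean
  have hcoeff : ∀ n : ℤ, ‖fourierCoeffOn h2π g n‖ ^ 2 ≤ ‖fourierCoeffOn h2π g' n‖ ^ 2 := by
    intro n
    rcases eq_or_ne n 0 with rfl | hn
    · simp [fourierCoeffOn_eq_integral, hmean, sq_nonneg]
    have h := fourierCoeffOn_of_hasDerivAt h2π hn (fun x _ => hg x) (hg'.intervalIntegrable _ _)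
    rw [hper, sub_self, mul_zero, zero_sub] at h
    have hrel : fourierCoeffOn h2π g' n = (I * n) * fourierCoeffOn h2π g n := by
      rw [h]
      field_simp
      push_cast
      ring_nf
    have hn1 : (1 : ℝ) ≤ ‖I * (n : ℂ)‖ := by
      simpa using (Int.cast_le (R := ℝ)).2 (Int.one_le_abs hn)
    rw [hrel, norm_mul, mul_pow]
    exact le_mul_of_one_le_left (by positivity) (one_le_pow₀ hn1)
  have := hasSum_le hcoeff (parseval g hg_cont) (parseval g' hg')
  exact le_of_mul_le_mul_left this (by positivity)

theorem EuclideanSpace.integral_norm_sq_le_integral_norm_sq_deriv {ι : Type*} [Fintype ι]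
    {g g' : ℝ → EuclideanSpace ℝ ι} (hg : ∀ x, HasDerivAt g (g' x) x) (hg' : Continuous g')
    (hper : g (2 * π) = g 0) (hmean : ∫ x in 0..2 * π, g x = 0) :
    ∫ x in 0..2 * π, ‖g x‖ ^ 2 ≤ ∫ x in 0..2 * π, ‖g' x‖ ^ 2 := by
  let L : ι → EuclideanSpace ℝ ι →L[ℝ] ℂ := fun i => Complex.ofRealCLM.comp (EuclideanSpace.proj i)
  have hnorm : ∀ v : EuclideanSpace ℝ ι, ‖v‖ ^ 2 = ∑ i, ‖L i v‖ ^ 2 := fun v => by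
    simp [L, EuclideanSpace.norm_sq_eq]
  have hg_cont : Continuous g := continuous_iff_continuousAt.2 fun x => (hg x).continuousAt
  have hcoord : ∀ i, ∫ x in 0..2 * π, ‖L i (g x)‖ ^ 2 ≤ ∫ x in 0..2 * π, ‖L i (g' x)‖ ^ 2 :=
    fun i => Complex.integral_norm_sq_le_integral_norm_sq_deriv
      (fun x => (L i).hasFDerivAt.comp_hasDerivAt x (hg x)) ((L i).continuous.comp hg')
      (by simp only [hper])
      (by rw [(L i).intervalIntegral_comp_comm (hg_cont.intervalIntegrable _ _), hmean, map_zero])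
  have hint : ∀ f : ℝ → EuclideanSpace ℝ ι, Continuous f →
      ∫ x in 0..2 * π, ‖f x‖ ^ 2 = ∑ i, ∫ x in 0..2 * π, ‖L i (f x)‖ ^ 2 := fun f hf => by
    simp_rw [hnorm]
    exact integral_finsetSum fun i _ =>
      (((L i).continuous.comp hf).norm.pow 2).intervalIntegrable _ _
  rw [hint g hg_cont, hint g' hg']
  exact Finset.sum_le_sum fun i _ => hcoord i

section PartialDeriv

variable {E : Type*} [NormedAddCommGroup E] [NormedSpace ℝ E] {u : ℝ → ℝ → E}

-- With these definitions the iterated `deriv`s of the theorem are definitionally iterated partials.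
noncomputable def partialFst (u : ℝ → ℝ → E) (t θ : ℝ) : E := deriv (fun s => u s θ) t

noncomputable def partialSnd (u : ℝ → ℝ → E) (t θ : ℝ) : E := deriv (fun φ => u t φ) θ

theorem hasDerivAt_partialFst (hu : Differentiable ℝ (uncurry u)) (t θ : ℝ) :
    HasDerivAt (fun s => u s θ) (partialFst u t θ) t :=
  ((hu.comp (differentiable_id.prodMk (differentiable_const θ))) t).hasDerivAt

theorem hasDerivAt_partialSnd (hu : Differentiable ℝ (uncurry u)) (t θ : ℝ) :
    HasDerivAt (fun φ => u t φ) (partialSnd u t θ) θ :=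
  ((hu.comp ((differentiable_const t).prodMk differentiable_id)) θ).hasDerivAt

theorem uncurry_partialFst (hu : Differentiable ℝ (uncurry u)) :
    uncurry (partialFst u) = fun p => fderiv ℝ (uncurry u) p (1, 0) := by
  funext ⟨t, θ⟩
  have h := (hu (t, θ)).hasFDerivAt.comp_hasDerivAt t
    ((hasDerivAt_id' t).prodMk (hasDerivAt_const t θ))
  exact (hasDerivAt_partialFst hu t θ).unique h

theorem uncurry_partialSnd (hu : Differentiable ℝ (uncurry u)) :
    uncurry (partialSnd u) = fun p => fderiv ℝ (uncurry u) p (0, 1) := by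
  funext ⟨t, θ⟩
  have h := (hu (t, θ)).hasFDerivAt.comp_hasDerivAt θ
    ((hasDerivAt_const θ t).prodMk (hasDerivAt_id' θ))
  exact (hasDerivAt_partialSnd hu t θ).unique h

theorem contDiff_partialFst {m n : WithTop ℕ∞} (hu : ContDiff ℝ n (uncurry u)) (hmn : m + 1 ≤ n) :
    ContDiff ℝ m (uncurry (partialFst u)) := by
  rw [uncurry_partialFst ((hu.of_le (le_add_self.trans hmn)).differentiable one_ne_zero)]
  exact (ContinuousLinearMap.apply ℝ E _).contDiff.comp (hu.fderiv_right hmn)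

theorem contDiff_partialSnd {m n : WithTop ℕ∞} (hu : ContDiff ℝ n (uncurry u)) (hmn : m + 1 ≤ n) :
    ContDiff ℝ m (uncurry (partialSnd u)) := by
  rw [uncurry_partialSnd ((hu.of_le (le_add_self.trans hmn)).differentiable one_ne_zero)]
  exact (ContinuousLinearMap.apply ℝ E _).contDiff.comp (hu.fderiv_right hmn)

theorem partialFst_partialSnd (hu : ContDiff ℝ 2 (uncurry u)) :
    partialFst (partialSnd u) = partialSnd (partialFst u) := by
  have hu1 : Differentiable ℝ (uncurry u) := hu.differentiable two_ne_zero
  have hd : Differentiable ℝ (fderiv ℝ (uncurry u)) :=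
    (hu.fderiv_right (m := 1) (by norm_num)).differentiable one_ne_zero
  have happly : ∀ (v : ℝ × ℝ) p, fderiv ℝ (fun q => fderiv ℝ (uncurry u) q v) p =
      (ContinuousLinearMap.apply ℝ E v).comp (fderiv ℝ (fderiv ℝ (uncurry u)) p) := fun v p =>
    ((ContinuousLinearMap.apply ℝ E v).hasFDerivAt.comp p (hd p).hasFDerivAt).fderiv
  have hsymm := fun p => (hu.contDiffAt (x := p)).isSymmSndFDerivAt (by simp)
  ext t θ
  have h₁ := congrFun (uncurry_partialFst
    ((contDiff_partialSnd hu (m := 1) (by norm_num)).differentiable one_ne_zero)) (t, θ)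
  have h₂ := congrFun (uncurry_partialSnd
    ((contDiff_partialFst hu (m := 1) (by norm_num)).differentiable one_ne_zero)) (t, θ)
  simp only [uncurry_apply_pair] at h₁ h₂
  rw [h₁, h₂, uncurry_partialSnd hu1, uncurry_partialFst hu1, happly, happly]
  exact hsymm _ _ _

theorem partialFst_periodic {T : ℝ} (hper : ∀ t, Periodic (u t) T) (t : ℝ) :
    Periodic (partialFst u t) T := fun θ => by
  simp only [partialFst, hper _ θ]

theorem partialSnd_periodic {T : ℝ} (hper : ∀ t, Periodic (u t) T) (t : ℝ) :
    Periodic (partialSnd u t) T := fun θ => by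
  simp only [partialSnd, ← deriv_comp_add_const, hper t _]

theorem hasDerivAt_integral_partialFst [CompleteSpace E] (hu : ContDiff ℝ 1 (uncurry u))
    (a b t : ℝ) :
    HasDerivAt (fun s => ∫ θ in a..b, u s θ) (∫ θ in a..b, partialFst u t θ) t := by
  have hu' : Continuous (uncurry (partialFst u)) :=
    (contDiff_partialFst hu (m := 0) (by simp)).continuous
  obtain ⟨C, hC⟩ := ((isCompact_closedBall t 1).prod
    (isCompact_uIcc (a := a) (b := b))).exists_bound_of_continuousOn hu'.continuousOn
  refine (hasDerivAt_integral_of_dominated_loc_of_deriv_le (bound := fun _ => C)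
    (Metric.ball_mem_nhds t one_pos)
    (Filter.Eventually.of_forall fun s => (hu.continuous.uncurry_left s).aestronglyMeasurable)
    ((hu.continuous.uncurry_left t).intervalIntegrable _ _)
    (hu'.uncurry_left t).aestronglyMeasurable ?_ intervalIntegrable_const
    (Filter.Eventually.of_forall fun θ _ s _ =>
      hasDerivAt_partialFst (hu.differentiable one_ne_zero) s θ)).2
  exact Filter.Eventually.of_forall fun θ hθ s hs =>
    hC (s, θ) ⟨Metric.ball_subset_closedBall hs, uIoc_subset_uIcc hθ⟩

theorem integral_partialSnd_eq_zero [CompleteSpace E] (hu : ContDiff ℝ 1 (uncurry u)) {T : ℝ}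
    (hper : ∀ t, Periodic (u t) T) (t : ℝ) : ∫ θ in 0..T, partialSnd u t θ = 0 := by
  have hcont := (contDiff_partialSnd hu (m := 0) (by simp)).continuous.uncurry_left t
  rw [integral_eq_sub_of_hasDerivAt
    (fun θ _ => hasDerivAt_partialSnd (hu.differentiable one_ne_zero) t θ)
    (hcont.intervalIntegrable _ _)]
  simpa using sub_eq_zero.2 (hper t 0)

end PartialDeriv

section InnerProduct

variable {E : Type*} [NormedAddCommGroup E] [InnerProductSpace ℝ E]

theorem hasDerivAt_integral_inner {v w : ℝ → ℝ → E} (hv : ContDiff ℝ 1 (uncurry v))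
    (hw : ContDiff ℝ 1 (uncurry w)) (a b t : ℝ) :
    HasDerivAt (fun s => ∫ θ in a..b, ⟪v s θ, w s θ⟫)
      (∫ θ in a..b, (⟪partialFst v t θ, w t θ⟫ + ⟪v t θ, partialFst w t θ⟫)) t := by
  have h := hasDerivAt_integral_partialFst (u := fun s θ => ⟪v s θ, w s θ⟫) (hv.inner ℝ hw) a b t
  refine h.congr_deriv (integral_congr fun θ _ => ?_)
  rw [add_comm]
  exact ((hasDerivAt_partialFst (hv.differentiable one_ne_zero) t θ).inner ℝ
    (hasDerivAt_partialFst (hw.differentiable one_ne_zero) t θ)).deriv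

theorem integral_inner_deriv_eq_neg {p q p' q' : ℝ → E} {a b : ℝ}
    (hp : ∀ x, HasDerivAt p (p' x) x) (hq : ∀ x, HasDerivAt q (q' x) x)
    (hp' : Continuous p') (hq' : Continuous q') (hpab : p a = p b) (hqab : q a = q b) :
    ∫ x in a..b, ⟪p' x, q x⟫ = -∫ x in a..b, ⟪p x, q' x⟫ := by
  have hpc : Continuous p := continuous_iff_continuousAt.2 fun x => (hp x).continuousAt
  have hqc : Continuous q := continuous_iff_continuousAt.2 fun x => (hq x).continuousAt
  have hc₁ : Continuous fun x => ⟪p x, q' x⟫ := hpc.inner hq'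
  have hc₂ : Continuous fun x => ⟪p' x, q x⟫ := hp'.inner hqc
  have h := integral_eq_sub_of_hasDerivAt (fun x _ => (hp x).inner ℝ (hq x))
    ((hc₁.add hc₂).intervalIntegrable a b)
  rw [← hpab, ← hqab, sub_self, integral_add (hc₁.intervalIntegrable a b)
    (hc₂.intervalIntegrable a b)] at h
  linarith

theorem deriv_deriv_integral_norm_sq_partialSnd {u : ℝ → ℝ → E} (hu : ContDiff ℝ 3 (uncurry u))
    {T : ℝ} (hper : ∀ t, Periodic (u t) T) (t : ℝ) :
    deriv (deriv fun s => ∫ θ in 0..T, ‖partialSnd u s θ‖ ^ 2) t =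
      2 * ∫ θ in 0..T, (‖partialFst (partialSnd u) t θ‖ ^ 2 -
        ⟪partialFst (partialFst u) t θ, partialSnd (partialSnd u) t θ⟫) := by
  set v := partialSnd u
  have hv : ContDiff ℝ 2 (uncurry v) := contDiff_partialSnd hu (by norm_num)
  have hv₁ : ContDiff ℝ 1 (uncurry v) := hv.of_le one_le_two
  have hvt : ContDiff ℝ 1 (uncurry (partialFst v)) := contDiff_partialFst hv (by norm_num)
  have hut : ContDiff ℝ 2 (uncurry (partialFst u)) := contDiff_partialFst hu (by norm_num)
  have hutt : ContDiff ℝ 1 (uncurry (partialFst (partialFst u))) :=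
    contDiff_partialFst hut (by norm_num)
  have hf' : deriv (fun s => ∫ θ in 0..T, ‖v s θ‖ ^ 2) =
      fun s => 2 * ∫ θ in 0..T, ⟪partialFst v s θ, v s θ⟫ := by
    funext s
    simp_rw [← real_inner_self_eq_norm_sq]
    rw [(hasDerivAt_integral_inner hv₁ hv₁ 0 T s).deriv, ← integral_const_mul]
    refine integral_congr fun θ _ => ?_
    rw [real_inner_comm (v s θ)]
    ring
  rw [hf', ((hasDerivAt_integral_inner hvt hv₁ 0 T t).const_mul 2).deriv]
  have hcomm : partialFst (partialFst v) = partialSnd (partialFst (partialFst u)) := by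
    rw [partialFst_partialSnd (hu.of_le (by norm_num)), partialFst_partialSnd hut]
  have hibp : ∫ θ in 0..T, ⟪partialFst (partialFst v) t θ, v t θ⟫ =
      -∫ θ in 0..T, ⟪partialFst (partialFst u) t θ, partialSnd v t θ⟫ := by
    rw [hcomm]
    refine integral_inner_deriv_eq_neg (hasDerivAt_partialSnd (hutt.differentiable one_ne_zero) t)
      (hasDerivAt_partialSnd (hv.differentiable two_ne_zero) t)
      ((contDiff_partialSnd hutt (m := 0) (by simp)).continuous.uncurry_left t)
      ((contDiff_partialSnd hv (m := 1) (by norm_num)).continuous.uncurry_left t) ?_ ?_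
    · simpa using (partialFst_periodic (partialFst_periodic hper) t 0).symm
    · simpa using (partialSnd_periodic hper t 0).symm
  have hc : ∀ {w₁ w₂ : ℝ → ℝ → E}, Continuous (uncurry w₁) → Continuous (uncurry w₂) →
      IntervalIntegrable (fun θ => ⟪w₁ t θ, w₂ t θ⟫) MeasureTheory.volume 0 T :=
    fun h₁ h₂ => ((h₁.uncurry_left t).inner (h₂.uncurry_left t)).intervalIntegrable _ _
  simp_rw [← real_inner_self_eq_norm_sq]
  rw [integral_add (hc (contDiff_partialFst hvt (m := 0) (by simp)).continuous hv.continuous)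
    (hc hvt.continuous hvt.continuous), hibp, integral_sub (hc hvt.continuous hvt.continuous)
    (hc hutt.continuous (contDiff_partialSnd hv (m := 0) (by simp)).continuous)]
  ring

theorem three_halves_norm_sq_sub_le_neg_two_inner {X Y : E} {b : ℝ} (h : ‖Y + X‖ ≤ b) :
    3 / 2 * ‖X‖ ^ 2 - 2 * b ^ 2 ≤ -2 * ⟪Y, X⟫ := by
  have hinner : ⟪Y, X⟫ ≤ b * ‖X‖ - ‖X‖ ^ 2 := by
    have := (real_inner_le_norm (Y + X) X).trans (mul_le_mul_of_nonneg_right h (norm_nonneg X))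
    rw [inner_add_left, real_inner_self_eq_norm_sq] at this
    linarith
  nlinarith [sq_nonneg (‖X‖ - 2 * b)]

theorem integral_three_halves_norm_sq_sub_le {X Y W : ℝ → E} {e : ℝ → ℝ} {a b c : ℝ}
    (hab : a ≤ b) (hX : Continuous X) (hY : Continuous Y) (hW : Continuous W) (he : Continuous e)
    (h : ∀ x, ‖Y x + X x‖ ≤ c * e x) :
    3 / 2 * (∫ x in a..b, ‖X x‖ ^ 2) - 2 * c ^ 2 * ∫ x in a..b, e x ^ 2 ≤
      2 * ∫ x in a..b, (‖W x‖ ^ 2 - ⟪Y x, X x⟫) := by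
  have hpt : ∀ x, 3 / 2 * ‖X x‖ ^ 2 - 2 * c ^ 2 * e x ^ 2 ≤ 2 * (‖W x‖ ^ 2 - ⟪Y x, X x⟫) :=
    fun x => by nlinarith [three_halves_norm_sq_sub_le_neg_two_inner (h x), sq_nonneg ‖W x‖]
  rw [← integral_const_mul, ← integral_const_mul, ← integral_const_mul, ← integral_sub]
  · exact integral_mono_on hab (Continuous.intervalIntegrable (by fun_prop) _ _)
      (Continuous.intervalIntegrable (by fun_prop) _ _) fun x _ => hpt x
  all_goals exact Continuous.intervalIntegrable (by fun_prop) _ _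

end InnerProduct

theorem stmt_11_general (N : ℕ) (r₁ r₂ a : ℝ)
    (u : ℝ → ℝ → EuclideanSpace ℝ (Fin N))
    (hu : ContDiff ℝ 3 (Function.uncurry u))
    (hper : ∀ t, Function.Periodic (u t) (2*π))
    (hA : ∀ t θ, ‖deriv (deriv (fun s => u s θ)) t + deriv (deriv (fun φ => u t φ)) θ‖ ≤
      a * (‖deriv (fun s => u s θ) t‖^2 + ‖deriv (fun φ => u t φ) θ‖^2)) :
    ∀ t ∈ Icc r₁ r₂,
      3/2 * (∫ θ in (0:ℝ)..(2*π), ‖deriv (fun φ => u t φ) θ‖^2) -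
          2 * a^2 * ∫ θ in (0:ℝ)..(2*π),
            (‖deriv (fun s => u s θ) t‖^2 + ‖deriv (fun φ => u t φ) θ‖^2)^2 ≤
        deriv (deriv (fun s => ∫ θ in (0:ℝ)..(2*π), ‖deriv (fun φ => u s φ) θ‖^2)) t := by
  intro t _
  have hu₁ : ContDiff ℝ 2 (uncurry (partialFst u)) := contDiff_partialFst hu (by norm_num)
  have hu₂ : ContDiff ℝ 2 (uncurry (partialSnd u)) := contDiff_partialSnd hu (by norm_num)
  have hu₁₁ : ContDiff ℝ 1 (uncurry (partialFst (partialFst u))) :=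
    contDiff_partialFst hu₁ (by norm_num)
  have hu₂₁ : ContDiff ℝ 1 (uncurry (partialFst (partialSnd u))) :=
    contDiff_partialFst hu₂ (by norm_num)
  have hu₂₂ : ContDiff ℝ 1 (uncurry (partialSnd (partialSnd u))) :=
    contDiff_partialSnd hu₂ (by norm_num)
  have hwirt : ∫ θ in 0..2 * π, ‖partialSnd u t θ‖ ^ 2 ≤
      ∫ θ in 0..2 * π, ‖partialSnd (partialSnd u) t θ‖ ^ 2 :=
    EuclideanSpace.integral_norm_sq_le_integral_norm_sq_deriv
      (hasDerivAt_partialSnd (hu₂.differentiable two_ne_zero) t)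
      (hu₂₂.continuous.uncurry_left t) (by simpa using partialSnd_periodic hper t 0)
      (integral_partialSnd_eq_zero (hu.of_le (by norm_num)) hper t)
  calc 3 / 2 * (∫ θ in 0..2 * π, ‖partialSnd u t θ‖ ^ 2) - 2 * a ^ 2 *
        ∫ θ in 0..2 * π, (‖partialFst u t θ‖ ^ 2 + ‖partialSnd u t θ‖ ^ 2) ^ 2
      ≤ 3 / 2 * (∫ θ in 0..2 * π, ‖partialSnd (partialSnd u) t θ‖ ^ 2) - 2 * a ^ 2 *
        ∫ θ in 0..2 * π, (‖partialFst u t θ‖ ^ 2 + ‖partialSnd u t θ‖ ^ 2) ^ 2 := by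
        gcongr
    _ ≤ 2 * ∫ θ in 0..2 * π, (‖partialFst (partialSnd u) t θ‖ ^ 2 -
          ⟪partialFst (partialFst u) t θ, partialSnd (partialSnd u) t θ⟫) :=
        integral_three_halves_norm_sq_sub_le two_pi_pos.le
          (hu₂₂.continuous.uncurry_left t) (hu₁₁.continuous.uncurry_left t)
          (hu₂₁.continuous.uncurry_left t)
          (e := fun θ => ‖partialFst u t θ‖ ^ 2 + ‖partialSnd u t θ‖ ^ 2)
          (by fun_prop) (hA t)
    _ = deriv (deriv fun s => ∫ θ in 0..2 * π, ‖partialSnd u s θ‖ ^ 2) t :=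
        (deriv_deriv_integral_norm_sq_partialSnd hu hper t).symm

/-- Differential inequality for the θ-energy of a `C³` harmonic map from a flat cylinder
into a compact submanifold `M ⊂ ℝᴺ` whose second fundamental form satisfies
`sup_M |A| = a` (so that `|Δu| ≤ a|∇u|²`): the function `f(t) = ∫_{S¹} |u_θ|²` satisfies
`f'' ≥ (3/2) f - 2 a² ∫_{S¹} |∇u|⁴`. -/
theorem stmt_11 (N : ℕ) (r₁ r₂ a : ℝ) (h12 : r₁ < r₂) (ha : 0 ≤ a)
    (u : ℝ → ℝ → EuclideanSpace ℝ (Fin N))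
    (M : Set (EuclideanSpace ℝ (Fin N)))
    (Tan : EuclideanSpace ℝ (Fin N) → Submodule ℝ (EuclideanSpace ℝ (Fin N)))
    (hu : ContDiff ℝ 3 (Function.uncurry u))
    (hper : ∀ t, Function.Periodic (u t) (2*π))
    (hmem : ∀ t θ, u t θ ∈ M)
    (hnormal : ∀ t θ, ∀ v ∈ Tan (u t θ),
      ⟪deriv (deriv (fun s => u s θ)) t + deriv (deriv (fun φ => u t φ)) θ, v⟫ = 0)
    (htan1 : ∀ t θ, deriv (fun s => u s θ) t ∈ Tan (u t θ))
    (htan2 : ∀ t θ, deriv (fun φ => u t φ) θ ∈ Tan (u t θ))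
    (hA : ∀ t θ, ‖deriv (deriv (fun s => u s θ)) t + deriv (deriv (fun φ => u t φ)) θ‖ ≤
      a * (‖deriv (fun s => u s θ) t‖^2 + ‖deriv (fun φ => u t φ) θ‖^2)) :
    ∀ t ∈ Icc r₁ r₂,
      3/2 * (∫ θ in (0:ℝ)..(2*π), ‖deriv (fun φ => u t φ) θ‖^2) -
          2 * a^2 * ∫ θ in (0:ℝ)..(2*π),
            (‖deriv (fun s => u s θ) t‖^2 + ‖deriv (fun φ => u t φ) θ‖^2)^2 ≤
        deriv (deriv (fun s => ∫ θ in (0:ℝ)..(2*π), ‖deriv (fun φ => u s φ) θ‖^2)) t :=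
  stmt_11_general N r₁ r₂ a u hu hper hA
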